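/- Let T be a theory extending PA with a unary predicate B satisfying, for all sentences F, G: (K) B(⌜F→G⌝) → (B(⌜F⌝) → B(⌜G⌝)), (4) B(⌜F⌝) → B(⌜B(⌜F⌝)⌝), (D) B(⌜¬F⌝) → ¬B(⌜F⌝), and (Nec) T ⊢ F implies T ⊢ B(⌜F⌝). Then T is inconsistent. -/

import Mathlib

/-!
If `D ↔ ¬B D` is provable, necessitation and K turn `D → ¬B D` into `B D → B ¬B D`, and D
gives `B ¬B D → ¬B B D`; so believing `D` means not believing that one believes it, which
contradicts 4. Hence `¬B D` is provable, so `D` is, so `B D` is by necessitation.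
-/

/-- Formulas of an abstract language with an operator `B` ("belief predicate"). -/
inductive Fm : Type
  | atom : ℕ → Fm
  | bot : Fm
  | imp : Fm → Fm → Fm
  | B : Fm → Fm

namespace Fm

def neg (A : Fm) : Fm := imp A bot
def conj (A B : Fm) : Fm := neg (imp A (neg B))
def iff' (A B : Fm) : Fm := conj (imp A B) (imp B A)

end Fm

open Fm

structure HilbertTheory (Prov : Fm → Prop) : Prop where
  ax1 (F G : Fm) : Prov (imp F (imp G F))
  ax2 (F G H : Fm) : Prov (imp (imp F (imp G H)) (imp (imp F G) (imp F H)))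
  ax3 (F G : Fm) : Prov (imp (imp (neg F) (neg G)) (imp G F))
  mp {F G : Fm} : Prov (imp F G) → Prov F → Prov G

structure BeliefTheory (Prov : Fm → Prop) : Prop extends HilbertTheory Prov where
  axK (F G : Fm) : Prov (imp (B (imp F G)) (imp (B F) (B G)))
  ax4 (F : Fm) : Prov (imp (B F) (B (B F)))
  axD (F : Fm) : Prov (imp (B (neg F)) (neg (B F)))
  nec {F : Fm} : Prov F → Prov (B F)

namespace HilbertTheory

variable {Prov : Fm → Prop}

theorem imp_self (T : HilbertTheory Prov) (F : Fm) : Prov (imp F F) :=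
  T.mp (T.mp (T.ax2 F (imp F F) F) (T.ax1 F (imp F F))) (T.ax1 F F)

theorem imp_mono_right (T : HilbertTheory Prov) (F : Fm) {G H : Fm} (h : Prov (imp G H)) :
    Prov (imp (imp F G) (imp F H)) :=
  T.mp (T.ax2 F G H) (T.mp (T.ax1 (imp G H) F) h)

theorem imp_trans (T : HilbertTheory Prov) {F G H : Fm} (hFG : Prov (imp F G))
    (hGH : Prov (imp G H)) : Prov (imp F H) :=
  T.mp (T.imp_mono_right F hGH) hFG

theorem imp_swap (T : HilbertTheory Prov) {F G H : Fm} (h : Prov (imp F (imp G H))) :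
    Prov (imp G (imp F H)) :=
  T.imp_trans (T.ax1 G F) (T.mp (T.ax2 F G H) h)

theorem bot_imp (T : HilbertTheory Prov) (F : Fm) : Prov (imp bot F) :=
  T.mp (T.ax3 F bot) (T.mp (T.ax1 (neg bot) (neg F)) (T.imp_self bot))

theorem not_not_intro (T : HilbertTheory Prov) (F : Fm) : Prov (imp F (neg (neg F))) :=
  T.imp_swap (T.imp_self (neg F))

theorem not_not_elim (T : HilbertTheory Prov) (F : Fm) : Prov (imp (neg (neg F)) F) :=
  T.mp (T.ax3 F (neg (neg F))) (T.not_not_intro (neg F))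

theorem conj_left (T : HilbertTheory Prov) {F G : Fm} (h : Prov (conj F G)) : Prov F :=
  T.mp (T.not_not_elim F) (T.imp_trans (T.imp_mono_right F (T.bot_imp (neg G))) h)

theorem conj_right (T : HilbertTheory Prov) {F G : Fm} (h : Prov (conj F G)) : Prov G :=
  T.mp (T.not_not_elim G) (T.imp_trans (T.ax1 (neg G) F) h)

theorem iff_mp (T : HilbertTheory Prov) {F G : Fm} (h : Prov (iff' F G)) : Prov (imp F G) :=
  T.conj_left h

theorem iff_mpr (T : HilbertTheory Prov) {F G : Fm} (h : Prov (iff' F G)) : Prov (imp G F) :=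
  T.conj_right h

theorem neg_of_imp_of_imp_neg (T : HilbertTheory Prov) {F G : Fm} (h : Prov (imp F G))
    (hn : Prov (imp F (neg G))) : Prov (neg F) :=
  T.mp (T.mp (T.ax2 F G bot) hn) h

end HilbertTheory

namespace BeliefTheory

variable {Prov : Fm → Prop}

theorem box_mono (T : BeliefTheory Prov) {F G : Fm} (h : Prov (imp F G)) :
    Prov (imp (B F) (B G)) :=
  T.mp (T.axK F G) (T.nec h)

theorem neg_box_of_imp_neg_box (T : BeliefTheory Prov) {F : Fm}
    (h : Prov (imp F (neg (B F)))) : Prov (neg (B F)) :=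
  T.neg_of_imp_of_imp_neg (T.ax4 F) (T.imp_trans (T.box_mono h) (T.axD (B F)))

theorem bot_of_iff_neg_box (T : BeliefTheory Prov) {F : Fm}
    (hdiag : Prov (iff' F (neg (B F)))) : Prov bot :=
  have hnotBF : Prov (neg (B F)) := T.neg_box_of_imp_neg_box (T.iff_mp hdiag)
  T.mp hnotBF (T.nec (T.mp (T.iff_mpr hdiag) hnotBF))

end BeliefTheory

/-- The Believer Paradox: a theory closed under propositional consequence with a
belief operator `B` satisfying schemes K, 4, D and the necessitation rule,
together with a diagonal sentence `D ↔ ¬B D` (as supplied by the Fixed Point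
Lemma in any theory extending PA), is inconsistent. -/
theorem believer_paradox
    (Prov : Fm → Prop)
    (ax1 : ∀ A B, Prov (imp A (imp B A)))
    (ax2 : ∀ A B C, Prov (imp (imp A (imp B C)) (imp (imp A B) (imp A C))))
    (ax3 : ∀ A B, Prov (imp (imp (neg A) (neg B)) (imp B A)))
    (mp : ∀ A B, Prov (imp A B) → Prov A → Prov B)
    (hK : ∀ F G, Prov (imp (B (imp F G)) (imp (B F) (B G))))
    (h4 : ∀ F, Prov (imp (B F) (B (B F))))
    (hD : ∀ F, Prov (imp (B (neg F)) (neg (B F))))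
    (hNec : ∀ F, Prov F → Prov (B F))
    (D : Fm) (hdiag : Prov (iff' D (neg (B D)))) :
    Prov bot :=
  have T : BeliefTheory Prov :=
    { ax1, ax2, ax3, mp := mp _ _, axK := hK, ax4 := h4, axD := hD, nec := hNec _ }
  T.bot_of_iff_neg_box hdiag
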